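/- Fix integers r ≥ 1 and g. There exist an integer s ≥ 1 and positive integers d_1, …, d_s such that exactly 2r of the d_i are even, Σ_{i=1}^{s}(d_i − 1) is even, and g = 1 + (Σ_{i=1}^{s} d_i) + (1/2)·Σ_{i=1}^{s}(d_i − 1), if and only if g ≥ 5r + 1. -/

import Mathlib

/-
Writing `2 (g - 1) = Σ (3 d_i - 1)`, every summand is at least `2`, and at least `5` when `d_i`
is even; so `2r` even entries force `g ≥ 5r + 1`. Conversely `g = 5r + 1 + Δ` is realised by
`2r` entries equal to `2` followed by `Δ` entries equal to `1`.
-/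

lemma ite_even_five_le_three_mul_sub_one {d : ℕ} (hd : 1 ≤ d) :
    (if Even d then 5 else 0 : ℚ) ≤ 3 * d - 1 := by
  have hd' : (1 : ℚ) ≤ d := by exact_mod_cast hd
  split_ifs with heven
  · obtain ⟨k, rfl⟩ := heven
    have hk : (1 : ℚ) ≤ k := by exact_mod_cast (by omega : 1 ≤ k)
    push_cast
    linarith
  · linarith

lemma five_mul_card_filter_even_le_sum {ι : Type*} (s : Finset ι) (f : ι → ℕ)
    (hf : ∀ i ∈ s, 1 ≤ f i) :
    5 * ((s.filter (fun i => Even (f i))).card : ℚ) ≤ ∑ i ∈ s, (3 * (f i : ℚ) - 1) := by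
  rw [Finset.natCast_card_filter, Finset.mul_sum]
  refine Finset.sum_le_sum fun i hi => ?_
  simpa only [mul_ite, mul_one, mul_zero] using ite_even_five_le_three_mul_sub_one (hf i hi)

lemma sum_comp_append_const {α M : Type*} [AddCommMonoid M] (m n : ℕ) (a b : α) (F : α → M) :
    ∑ i, F (Fin.append (fun _ : Fin m => a) (fun _ : Fin n => b) i) = m • F a + n • F b := by
  simp [Fin.sum_univ_add]

open Finset in
/-- Realizability criterion: there is a ramification configuration `(d_1, …, d_s)` with
exactly `2r` even entries, even `Σ(d_i − 1)`, and `g = 1 + Σd_i + (1/2)Σ(d_i − 1)`,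
iff `g ≥ 5r + 1`. -/
theorem stmt_2 (r : ℕ) (hr : 1 ≤ r) (g : ℤ) :
    (∃ s : ℕ, 1 ≤ s ∧ ∃ ρ : Fin s → ℕ,
      (∀ i, 1 ≤ ρ i) ∧
      (Finset.univ.filter (fun i => Even (ρ i))).card = 2 * r ∧
      Even (∑ i, (ρ i - 1)) ∧
      (g : ℚ) = 1 + (∑ i, (ρ i : ℚ)) + (∑ i, ((ρ i : ℚ) - 1)) / 2) ↔
    5 * (r : ℤ) + 1 ≤ g := by
  constructor
  · rintro ⟨s, -, ρ, hρ, hcard, -, hg⟩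
    have hsum : 2 * ((g : ℚ) - 1) = ∑ i, (3 * (ρ i : ℚ) - 1) := by
      rw [hg]
      simp only [Finset.sum_sub_distrib, ← Finset.mul_sum]
      ring
    have hbound := five_mul_card_filter_even_le_sum univ ρ fun i _ => hρ i
    rw [hcard, ← hsum] at hbound
    have : (5 * r + 1 : ℚ) ≤ g := by push_cast at hbound; linarith
    exact_mod_cast this
  · intro hg
    obtain ⟨Δ, rfl⟩ : ∃ Δ : ℕ, g = 5 * r + 1 + Δ := ⟨(g - (5 * r + 1)).toNat, by omega⟩
    refine ⟨2 * r + Δ, by omega, Fin.append (fun _ => 2) (fun _ => 1), ?_, ?_, ?_, ?_⟩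
    · simp [Fin.forall_fin_add]
    · rw [card_filter, sum_comp_append_const (F := fun d => if Even d then 1 else 0)]
      simp
    · rw [sum_comp_append_const (F := fun d => d - 1)]
      simp
    · rw [sum_comp_append_const (F := fun d : ℕ => (d : ℚ)),
        sum_comp_append_const (F := fun d : ℕ => (d : ℚ) - 1)]
      push_cast
      ring
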